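/- arXiv:1912.06510 — 3 statements merged into one kernel-verified Lean document; each statement's English description precedes it below -/
import Mathlib

section
/- Existence of a virus with respect to a propagation vector: for every total computable function B : ℕ × ℕ → ℕ, there exists a code v such that for all p and x, φ_v(⟨p, x⟩) = φ_{B(v, p)}(x). -/
/-- The `e`-th partial computable function in a standard Gödel numbering. -/
def phi (e : ℕ) : ℕ →. ℕ :=
  (Denumerable.ofNat Nat.Partrec.Code e).eval

/-- Existence of a virus with respect to a propagation vector `B`. -/
theorem virus_wrt_propagation_vector (B : ℕ × ℕ → ℕ) (hB : Computable B) :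
    ∃ v : ℕ, ∀ p x : ℕ, phi v (Nat.pair p x) = phi (B (v, p)) x := by
  have hf : Partrec₂ (fun (c : Nat.Partrec.Code) (n : ℕ) =>
      phi (B (Encodable.encode c, n.unpair.1)) n.unpair.2) := by
    have h1 : Computable₂ (fun (c : Nat.Partrec.Code) (n : ℕ) =>
        (Denumerable.ofNat Nat.Partrec.Code (B (Encodable.encode c, n.unpair.1)))) :=
      Computable.ofNat _ |>.comp <| hB.comp <|
        (Computable.encode.comp Computable.fst).pair
          ((Computable.fst.comp Computable.unpair).comp Computable.snd)
    exact Nat.Partrec.Code.eval_part.comp h1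
      ((Computable.snd.comp Computable.unpair).comp Computable.snd)
  obtain ⟨c, hc⟩ := Nat.Partrec.Code.fixed_point₂ hf
  refine ⟨Encodable.encode c, fun p x => ?_⟩
  have : phi (Encodable.encode c) = c.eval := by
    simp [phi]
  rw [this, hc]
  simp
end

section
/- Existence of an ecto-symbiote (prepender-style) virus with respect to a composition operator: given a total computable δ : ℕ × ℕ → ℕ such that for all v, j, x, φ_{δ(v,j)}(x) = (φ_v(x)) >>= φ_j (i.e., the infected form first runs v then runs j on the result), there exists a code v such that for every list L of codes, φ_v(encode L) = encode (List.map (fun j => δ(v, j)) L). -/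
/-! Kleene's second recursion theorem, applied to the computable map sending a code `c` and
(the code of) a list `L` to the code of `L.map (fun j => δ (c, j))`, gives a program that knows its
own index and infects every program of its input with itself. -/

open Encodable Nat.Partrec

namespace Computable

variable {α β σ : Type*} [Primcodable α] [Primcodable β] [Primcodable σ]

theorem list_map {f : α → List β} {g : α → β → σ} (hf : Computable f) (hg : Computable₂ g) :
    Computable fun a => (f a).map (g a) := by
  -- recursion on `n ≤ (f a).length`, appending `g a (f a)[n]` at step `n`
  have step : Computable₂ fun (a : α) (p : ℕ × List σ) =>
      (Option.casesOn ((f a)[p.1]?) p.2 (fun b => p.2 ++ [g a b]) : List σ) :=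
    option_casesOn (list_getElem?.comp (hf.comp fst) (fst.comp snd)) (snd.comp snd)
      (list_concat.comp (snd.comp (snd.comp fst)) (hg.comp (fst.comp fst) snd)).to₂
  refine (nat_rec (list_length.comp hf) (const []) step).of_eq fun a => ?_
  have map_take : ∀ n, (Nat.rec ([] : List σ)
      (fun k IH => Option.casesOn ((f a)[k]?) IH (fun b => IH ++ [g a b])) n)
      = ((f a).take n).map (g a) := by
    intro n
    induction n with
    | zero => simp
    | succ n ih => cases h : (f a)[n]? <;> simp [ih, List.take_add_one, h]
  simpa using map_take (f a).length

end Computable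

theorem phi_encode (c : Code) : phi (encode c) = c.eval := by
  simp [phi, Denumerable.ofNat_encode]

theorem ecto_symbiote_exists_general (δ : ℕ × ℕ → ℕ) (hδ : Computable δ) :
    ∃ v : ℕ, ∀ L : List ℕ,
      phi v (Encodable.encode L) =
        Part.some (Encodable.encode (L.map fun j => δ (v, j))) := by
  have infect : Computable₂ fun (c : Code) (n : ℕ) =>
      encode ((Denumerable.ofNat (List ℕ) n).map fun j => δ (encode c, j)) :=
    Computable.encode.comp <| Computable.list_map
      ((Computable.ofNat (List ℕ)).comp Computable.snd)
      (hδ.comp ((Computable.encode.comp (Computable.fst.comp Computable.fst)).pair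
        Computable.snd)).to₂
  obtain ⟨c, hc⟩ := Code.fixed_point₂ infect.partrec₂
  refine ⟨encode c, fun L => ?_⟩
  rw [phi_encode, hc]
  simp [Denumerable.ofNat_encode]

/-- Existence of an ecto-symbiote virus w.r.t. a composition operator `δ`. -/
theorem ecto_symbiote_exists (δ : ℕ × ℕ → ℕ) (hδ : Computable δ)
    (hsem : ∀ v j x : ℕ, phi (δ (v, j)) x = (phi v x) >>= phi j) :
    ∃ v : ℕ, ∀ L : List ℕ,
      phi v (Encodable.encode L) =
        Part.some (Encodable.encode (L.map fun j => δ (v, j))) :=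
  ecto_symbiote_exists_general δ hδ
end

section
/- Multiple (n-fold) recursion theorem: for every k and every family f : Fin k → (ℕ →. ℕ) of partial recursive functions (each viewed as taking a (k+1)-tuple via iterated pairing), there exists a family of codes e : Fin k → ℕ such that for all i and x, φ_{e i}(x) = f i (⟨e 0, e 1, …, e (k-1), x⟩). -/
open Encodable Nat.Partrec Nat.Partrec.Code

theorem Nat.Partrec.partrec₂_of_finite {ι : Type*} [Primcodable ι] [Finite ι]
    {f : ι → ℕ →. ℕ} (hf : ∀ i, Nat.Partrec (f i)) : Partrec₂ f := by
  choose c hc using fun i => exists_code.1 (hf i)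
  have := eval_part.comp ((Primrec.dom_finite c).to_comp.comp Computable.fst) Computable.snd
  exact this.of_eq fun p => by simp [hc]

theorem Nat.Partrec.Code.fixed_point₂_encode {α : Type*} [Primcodable α]
    {F : Code → α →. ℕ} (hF : Partrec₂ F) : ∃ c : Code, ∀ a, c.eval (encode a) = F c a := by
  have hG : Partrec₂ fun c n => (Part.ofOption (decode (α := α) n)).bind (F c) :=
    (Computable.ofOption (Computable.decode.comp Computable.snd)).bind
      (hF.comp (Computable.fst.comp Computable.fst) Computable.snd)
  obtain ⟨c, hc⟩ := fixed_point₂ hG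
  exact ⟨c, fun a => by rw [hc]; simp only [encodek]; exact Part.bind_some a (F c)⟩

theorem phi_encode_curry (c : Code) (m x : ℕ) :
    phi (encode (c.curry m)) x = c.eval (Nat.pair m x) := by
  rw [phi, Denumerable.ofNat_encode, eval_curry]

def curryCodes (k : ℕ) (c : Code) : Fin k → ℕ := fun j => encode (c.curry j)

theorem primrec_ofFn_curryCodes (k : ℕ) : Primrec fun c => List.ofFn (curryCodes k c) :=
  Primrec.list_ofFn fun j => Primrec.encode.comp (primrec₂_curry.comp .id (.const (j : ℕ)))

/-- Multiple (n-fold) recursion theorem: `k` mutually self-referential codes,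
with the tuple `(e 0, …, e (k-1), x)` passed as an encoded list. -/
theorem multiple_recursion (k : ℕ) (f : Fin k → ℕ →. ℕ)
    (hf : ∀ i, Nat.Partrec (f i)) :
    ∃ e : Fin k → ℕ, ∀ (i : Fin k) (x : ℕ),
      phi (e i) x = f i (Encodable.encode (List.ofFn e ++ [x])) := by
  have hF : Partrec₂ fun c (p : Fin k × ℕ) =>
      f p.1 (encode (List.ofFn (curryCodes k c) ++ [p.2])) :=
    (Nat.Partrec.partrec₂_of_finite hf).comp (Computable.fst.comp Computable.snd)
      (Computable.encode.comp (Computable.list_append.comp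
        ((primrec_ofFn_curryCodes k).to_comp.comp Computable.fst)
        (Computable.list_cons.comp (Computable.snd.comp Computable.snd) (Computable.const []))))
  obtain ⟨c, hc⟩ := fixed_point₂_encode hF
  exact ⟨curryCodes k c, fun i x => (phi_encode_curry c i x).trans (hc (i, x))⟩
end
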